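/- arXiv:2605.22713 — 3 statements merged into one kernel-verified Lean document; each statement's English description precedes it below -/
import Mathlib

section
/- Let M ⊆ B(H) be a von Neumann algebra and let (R, T, ψ) be a bipartite exact embezzlement protocol for α in (M, M', H). Suppose moreover that the block operator of R on ℓ²(Fin d; H) is unitary. Then for every d × d matrix (X i j)_{i,j ∈ Fin d} of elements of M, ∑_{k,ℓ ∈ Fin d} ⟨(R k 0)* (X k ℓ) (R ℓ 0) ψ, ψ⟩ = ∑_{k ∈ Fin d} (α k)^2 · ⟨(X k k) ψ, ψ⟩. (This expresses the unitary equivalence R(⟨·e₀,e₀⟩ ⊗ ω)R* = Tr(ρ(φ)·) ⊗ ω, where ω = ⟨· ψ, ψ⟩ and ρ(φ) = ∑ i, (α i)^2 E_{ii}.) -/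
open scoped InnerProductSpace
open ContinuousLinearMap

/-- The block operator on `ℓ²(Fin d; H)` associated with a `d × d` matrix of operators on `H`,
acting by `(R x) i = ∑ j, (R i j) (x j)`. -/
noncomputable def blockOp {H : Type*} [NormedAddCommGroup H] [InnerProductSpace ℂ H] {d : ℕ}
    (R : Fin d → Fin d → H →L[ℂ] H) :
    (PiLp 2 fun _ : Fin d => H) →L[ℂ] (PiLp 2 fun _ : Fin d => H) :=
  (((PiLp.continuousLinearEquiv 2 ℂ (fun _ : Fin d => H)).symm :
      (∀ _ : Fin d, H) →L[ℂ] (PiLp 2 fun _ : Fin d => H))) ∘L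
    (ContinuousLinearMap.pi fun i => ∑ j, (R i j) ∘L (ContinuousLinearMap.proj j)) ∘L
    (((PiLp.continuousLinearEquiv 2 ℂ (fun _ : Fin d => H)) :
      (PiLp 2 fun _ : Fin d => H) →L[ℂ] (∀ _ : Fin d, H)))

variable {H : Type*} [NormedAddCommGroup H] [InnerProductSpace ℂ H] [CompleteSpace H]

/-- `R` is a contraction in `M_d ⊗ M`: all blocks lie in `M` and the block operator on
`ℓ²(Fin d; H)` has operator norm at most `1`. -/
def IsContractionIn (M : VonNeumannAlgebra H) {d : ℕ}
    (R : Fin d → Fin d → H →L[ℂ] H) : Prop :=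
  (∀ i j, R i j ∈ M) ∧ ‖blockOp R‖ ≤ 1

/-- A bipartite exact embezzlement protocol for `α` in `(M, M', H)`: `R` is a contraction in
`M_d ⊗ M`, `T` is a contraction with blocks in the commutant `M'`, `ψ` is a unit vector, and
`(R i 0)(T j 0) ψ = δ_{ij} α i • ψ` for all `i, j`. -/
def BipartiteProtocol (M : VonNeumannAlgebra H) {d : ℕ} [NeZero d] (α : Fin d → ℝ)
    (R T : Fin d → Fin d → H →L[ℂ] H) (ψ : H) : Prop :=
  IsContractionIn M R ∧ IsContractionIn M.commutant T ∧ ‖ψ‖ = 1 ∧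
    ∀ i j, (R i 0) ((T j 0) ψ) = (if i = j then (α i : ℂ) else 0) • ψ

/-- A monopartite exact embezzlement protocol for `α` in `(M, H)`: `R` is a contraction in
`M_d ⊗ M`, `ψ` is a unit vector, and `⟨(R i 0)* X (R j 0) ψ, ψ⟩ = δ_{ij} (α i)² ⟨X ψ, ψ⟩`
for all `X ∈ M` and all `i, j`. -/
def MonopartiteProtocol (M : VonNeumannAlgebra H) {d : ℕ} [NeZero d] (α : Fin d → ℝ)
    (R : Fin d → Fin d → H →L[ℂ] H) (ψ : H) : Prop :=
  IsContractionIn M R ∧ ‖ψ‖ = 1 ∧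
    ∀ X ∈ M, ∀ i j : Fin d,
      ⟪(adjoint (R i 0)) (X ((R j 0) ψ)), ψ⟫_ℂ
        = (if i = j then ((α i : ℂ)) ^ 2 else 0) * ⟪X ψ, ψ⟫_ℂ

/-- The orthogonal projection of `H` onto the closure of `{Y ψ : Y ∈ S}`, as an operator
on `H`. -/
noncomputable def suppProjOn (S : Set (H →L[ℂ] H)) (ψ : H) : H →L[ℂ] H :=
  letI K := (Submodule.span ℂ ((fun Y : H →L[ℂ] H => Y ψ) '' S)).topologicalClosure
  K.subtypeL ∘L (K.orthogonalProjection : H →L[ℂ] K)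

/-- The support projection of the state `⟨· ψ, ψ⟩` on `M`: the orthogonal projection onto
the closure of `M' ψ`. -/
noncomputable def suppP (M : VonNeumannAlgebra H) (ψ : H) : H →L[ℂ] H :=
  suppProjOn (M.commutant : Set (H →L[ℂ] H)) ψ

/-- The support projection of the state `⟨· ψ, ψ⟩` on `M'`: the orthogonal projection onto
the closure of `M ψ`. -/
noncomputable def suppP' (M : VonNeumannAlgebra H) (ψ : H) : H →L[ℂ] H :=
  suppProjOn (M : Set (H →L[ℂ] H)) ψ

instance {H : Type*} [NormedAddCommGroup H] [InnerProductSpace ℂ H] [CompleteSpace H] {d : ℕ} :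
    CompleteSpace (PiLp 2 fun _ : Fin d => H) :=
  inferInstance

/-!
Put `ψ` in slot `0` of `ℓ²(Fin d; H)`. As `blockOp R` is isometric, `∑ i, ‖R i 0 ψ‖² = 1`.
Since `T j 0` commutes with `R i 0`, `T j 0 (R i 0 ψ) = δᵢⱼ αᵢ ψ`, so the contraction `blockOp T`
shows `αᵢ² ≤ ‖R i 0 ψ‖²`; as `∑ αᵢ² = 1` this is an equality. So `blockOp T` preserves the norm
of `R i 0 ψ` in slot `0`, hence its adjoint inverts it there: `R i 0 ψ = αᵢ (T i 0)* ψ`.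
Moving `(T l 0)*` past `X ∈ M` then gives
`⟨(R k 0)* X (R l 0) ψ, ψ⟩ = α_l ⟨X ψ, T l 0 (R k 0 ψ)⟩ = δₖₗ αₖ² ⟨X ψ, ψ⟩`,
i.e. the protocol is monopartite, and summing over `k, l` gives the theorem.
-/

theorem ContinuousLinearMap.adjoint_apply_apply_eq_of_norm_apply_eq {𝕜 E F : Type*} [RCLike 𝕜]
    [NormedAddCommGroup E] [InnerProductSpace 𝕜 E] [CompleteSpace E]
    [NormedAddCommGroup F] [InnerProductSpace 𝕜 F] [CompleteSpace F]
    {B : E →L[𝕜] F} (hB : ‖B‖ ≤ 1) {v : E} (hv : ‖B v‖ = ‖v‖) :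
    adjoint B (B v) = v := by
  have hre : RCLike.re ⟪adjoint B (B v), v⟫_𝕜 = ‖v‖ ^ 2 := by
    rw [adjoint_inner_left, ← hv, inner_self_eq_norm_sq]
  have hle : ‖adjoint B (B v)‖ ≤ ‖v‖ :=
    calc ‖adjoint B (B v)‖ ≤ 1 * ‖B v‖ := le_of_opNorm_le _ (by rwa [LinearIsometryEquiv.norm_map]) _
      _ = ‖v‖ := by rw [one_mul, hv]
  -- `‖B* B v - v‖² = ‖B* B v‖² - 2 Re ⟪B* B v, v⟫ + ‖v‖² = ‖B* B v‖² - ‖v‖² ≤ 0`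
  have hsq : ‖adjoint B (B v) - v‖ ^ 2 ≤ 0 := by
    rw [@norm_sub_sq 𝕜, hre]
    nlinarith [norm_nonneg v, norm_nonneg (adjoint B (B v))]
  rw [← sub_eq_zero, ← norm_eq_zero]
  exact pow_eq_zero_iff two_ne_zero |>.mp (le_antisymm hsq (by positivity))

theorem VonNeumannAlgebra.apply_apply_of_mem_commutant {M : VonNeumannAlgebra H}
    {Y Z : H →L[ℂ] H} (hY : Y ∈ M) (hZ : Z ∈ M.commutant) (x : H) : Y (Z x) = Z (Y x) :=
  congr($(VonNeumannAlgebra.mem_commutant_iff.mp hZ Y hY) x)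

section BlockOp

variable {H : Type*} [NormedAddCommGroup H] [InnerProductSpace ℂ H] {d : ℕ}
  (R : Fin d → Fin d → H →L[ℂ] H)

theorem blockOp_apply (x : PiLp 2 fun _ : Fin d => H) (i : Fin d) :
    blockOp R x i = ∑ j, R i j (x j) := by
  simp [blockOp]

theorem blockOp_single (j : Fin d) (v : H) :
    blockOp R (PiLp.single 2 j v) = WithLp.toLp 2 fun i => R i j v := by
  ext i
  simp [blockOp_apply, ← PiLp.toLp_single, Pi.single_apply, apply_ite]

theorem norm_sq_blockOp_single (j : Fin d) (v : H) :
    ‖blockOp R (PiLp.single 2 j v)‖ ^ 2 = ∑ i, ‖R i j v‖ ^ 2 := by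
  rw [blockOp_single, PiLp.norm_sq_eq_of_L2]

theorem sum_norm_sq_apply_le_of_norm_blockOp_le_one (hR : ‖blockOp R‖ ≤ 1) (j : Fin d) (v : H) :
    ∑ i, ‖R i j v‖ ^ 2 ≤ ‖v‖ ^ 2 := by
  rw [← norm_sq_blockOp_single, ← PiLp.norm_single 2 (fun _ : Fin d => H) j v]
  gcongr
  simpa using le_of_opNorm_le _ hR (PiLp.single 2 j v)

theorem sum_norm_sq_apply_of_norm_blockOp_apply (hR : ∀ x, ‖blockOp R x‖ = ‖x‖)
    (j : Fin d) (v : H) : ∑ i, ‖R i j v‖ ^ 2 = ‖v‖ ^ 2 := by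
  rw [← norm_sq_blockOp_single, hR, PiLp.norm_single]

theorem adjoint_blockOp [CompleteSpace H] :
    adjoint (blockOp R) = blockOp fun i j => adjoint (R j i) := by
  refine ((eq_adjoint_iff _ _).mpr fun x y => ?_).symm
  simp only [PiLp.inner_apply, blockOp_apply, sum_inner, inner_sum, adjoint_inner_left]
  exact Finset.sum_comm

end BlockOp

namespace BipartiteProtocol

variable {M : VonNeumannAlgebra H} {d : ℕ} [NeZero d] {α : Fin d → ℝ}
  {R T : Fin d → Fin d → H →L[ℂ] H} {ψ : H}

theorem apply_apply (h : BipartiteProtocol M α R T ψ) (i j : Fin d) :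
    T j 0 (R i 0 ψ) = (if i = j then (α i : ℂ) else 0) • ψ := by
  rw [← VonNeumannAlgebra.apply_apply_of_mem_commutant (h.1.1 i 0) (h.2.1.1 j 0)]
  exact h.2.2.2 i j

theorem sum_norm_sq_apply_apply (h : BipartiteProtocol M α R T ψ) (i : Fin d) :
    ∑ j, ‖T j 0 (R i 0 ψ)‖ ^ 2 = α i ^ 2 := by
  simp [h.apply_apply, apply_ite, norm_smul, h.2.2.1]

theorem norm_sq_apply (h : BipartiteProtocol M α R T ψ) (hsum : ∑ i, α i ^ 2 = 1)
    (hR : ∀ x, ‖blockOp R x‖ = ‖x‖) (i : Fin d) : ‖R i 0 ψ‖ ^ 2 = α i ^ 2 := by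
  have hle : ∀ i ∈ Finset.univ, α i ^ 2 ≤ ‖R i 0 ψ‖ ^ 2 := fun i _ =>
    h.sum_norm_sq_apply_apply i ▸ sum_norm_sq_apply_le_of_norm_blockOp_le_one T h.2.1.2 0 _
  have hsums : ∑ i, α i ^ 2 = ∑ i, ‖R i 0 ψ‖ ^ 2 := by
    rw [hsum, sum_norm_sq_apply_of_norm_blockOp_apply R hR, h.2.2.1, one_pow]
  exact ((Finset.sum_eq_sum_iff_of_le hle).mp hsums i (Finset.mem_univ i)).symm

theorem apply_eq_smul_adjoint_apply (h : BipartiteProtocol M α R T ψ)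
    (hsum : ∑ i, α i ^ 2 = 1) (hR : ∀ x, ‖blockOp R x‖ = ‖x‖) (i : Fin d) :
    R i 0 ψ = (α i : ℂ) • adjoint (T i 0) ψ := by
  have hnorm : ‖blockOp T (PiLp.single 2 0 (R i 0 ψ))‖
      = ‖(PiLp.single 2 0 (R i 0 ψ) : PiLp 2 fun _ : Fin d => H)‖ := by
    rw [← sq_eq_sq₀ (norm_nonneg _) (norm_nonneg _), norm_sq_blockOp_single,
      h.sum_norm_sq_apply_apply, PiLp.norm_single, h.norm_sq_apply hsum hR]
  have key := congr($(adjoint_apply_apply_eq_of_norm_apply_eq h.2.1.2 hnorm) 0)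
  simpa [blockOp_single, adjoint_blockOp, blockOp_apply, h.apply_apply, apply_ite] using key.symm

theorem monopartiteProtocol (h : BipartiteProtocol M α R T ψ) (hsum : ∑ i, α i ^ 2 = 1)
    (hR : ∀ x, ‖blockOp R x‖ = ‖x‖) : MonopartiteProtocol M α R ψ := by
  refine ⟨h.1, h.2.2.1, fun X hX k l => ?_⟩
  have hTl : adjoint (T l 0) ∈ M.commutant := star_eq_adjoint (T l 0) ▸ star_mem (h.2.1.1 l 0)
  rw [adjoint_inner_left, h.apply_eq_smul_adjoint_apply hsum hR l, map_smul,
    VonNeumannAlgebra.apply_apply_of_mem_commutant hX hTl, inner_smul_left, adjoint_inner_left,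
    h.apply_apply, inner_smul_right, Complex.conj_ofReal]
  split_ifs with hkl
  · subst hkl; ring
  · simp

end BipartiteProtocol

theorem unitary_equivalence_of_states_general
    {H : Type*} [NormedAddCommGroup H] [InnerProductSpace ℂ H] [CompleteSpace H]
    (M : VonNeumannAlgebra H) {d : ℕ} [NeZero d]
    (α : Fin d → ℝ) (hsum : ∑ i, (α i) ^ 2 = 1)
    (R T : Fin d → Fin d → H →L[ℂ] H) (ψ : H)
    (hproto : BipartiteProtocol M α R T ψ)
    (hU : blockOp R ∈ unitary ((PiLp 2 fun _ : Fin d => H) →L[ℂ] (PiLp 2 fun _ : Fin d => H)))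
    (X : Fin d → Fin d → H →L[ℂ] H) (hX : ∀ i j, X i j ∈ M) :
    ∑ k, ∑ l, ⟪(adjoint (R k 0)) ((X k l) ((R l 0) ψ)), ψ⟫_ℂ
      = ∑ k, ((α k : ℂ)) ^ 2 * ⟪(X k k) ψ, ψ⟫_ℂ := by
  have hmono := hproto.monopartiteProtocol hsum (norm_map_of_mem_unitary hU)
  simp only [hmono.2.2 _ (hX _ _), ite_mul, zero_mul, Finset.sum_ite_eq, Finset.mem_univ, if_true]

/-- If `(R, T, ψ)` is a bipartite exact embezzlement protocol for `α` and the block operator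
of `R` is unitary, then `R (⟨· e₀, e₀⟩ ⊗ ω) R* = Tr(ρ(φ)·) ⊗ ω`, i.e. for every matrix
`(X i j)` of elements of `M`,
`∑ k ℓ, ⟨(R k 0)* (X k ℓ) (R ℓ 0) ψ, ψ⟩ = ∑ k, (α k)² ⟨(X k k) ψ, ψ⟩`. -/
theorem unitary_equivalence_of_states
    {H : Type*} [NormedAddCommGroup H] [InnerProductSpace ℂ H] [CompleteSpace H]
    (M : VonNeumannAlgebra H) {d : ℕ} [NeZero d] (hd : 2 ≤ d)
    (α : Fin d → ℝ) (hα : ∀ i, 0 < α i) (hsum : ∑ i, (α i) ^ 2 = 1)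
    (R T : Fin d → Fin d → H →L[ℂ] H) (ψ : H)
    (hproto : BipartiteProtocol M α R T ψ)
    (hU : blockOp R ∈ unitary ((PiLp 2 fun _ : Fin d => H) →L[ℂ] (PiLp 2 fun _ : Fin d => H)))
    (X : Fin d → Fin d → H →L[ℂ] H) (hX : ∀ i j, X i j ∈ M) :
    ∑ k, ∑ l, ⟪(adjoint (R k 0)) ((X k l) ((R l 0) ψ)), ψ⟫_ℂ
      = ∑ k, ((α k : ℂ)) ^ 2 * ⟪(X k k) ψ, ψ⟫_ℂ :=
  unitary_equivalence_of_states_general M α hsum R T ψ hproto hU X hX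
end

section
/- Let M ⊆ B(H) be a von Neumann algebra and let (R, T, ψ) be a bipartite exact embezzlement protocol for α in (M, M', H). Then for all i, j ∈ Fin d, all X ∈ M and all Y ∈ M': ⟨(R i 0)* X (R j 0) ψ, ψ⟩ = (if i = j then (α i)^2 else 0) · ⟨X ψ, ψ⟩ and ⟨(T i 0)* Y (T j 0) ψ, ψ⟩ = (if i = j then (α i)^2 else 0) · ⟨Y ψ, ψ⟩. -/
open scoped InnerProductSpace
open ContinuousLinearMap

variable {H : Type*} [NormedAddCommGroup H] [InnerProductSpace ℂ H] [CompleteSpace H]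

/-!
Write `Rᵢ = R i 0` and `Tⱼ = T j 0`. Since `Rᵢ Tⱼ ψ = δᵢⱼ αᵢ ψ`, the contraction `R` gives
`αₗ² ≤ ‖Tₗ ψ‖²`, and summing against the contraction `T` with `∑ αₗ² = 1` forces equality.
A contraction preserving the norm of a vector is inverted there by its adjoint, so
`∑ₖ Tₖ* Tₖ ψ = ψ`; commuting `Rₗ ∈ M` past `Tₖ* ∈ M'` then yields `Rₗ ψ = αₗ Tₗ* ψ`, whence
`⟨Rᵢ* X Rⱼ ψ, ψ⟩ = αⱼ ⟨X ψ, Rᵢ Tⱼ ψ⟩ = δᵢⱼ αᵢ² ⟨X ψ, ψ⟩`. The statement for `T` is the same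
one for the protocol `(T, R, ψ)` in `(M', M'' = M)`.
-/

section ColumnOperator

variable {𝕜 E F ι : Type*} [RCLike 𝕜] [NormedAddCommGroup E] [InnerProductSpace 𝕜 E]
  [NormedAddCommGroup F] [InnerProductSpace 𝕜 F]

theorem ContinuousLinearMap.adjoint_apply_apply_eq_self_of_norm_apply_eq [CompleteSpace E]
    [CompleteSpace F] {A : E →L[𝕜] F} (hA : ‖A‖ ≤ 1) {x : E} (hx : ‖A x‖ = ‖x‖) :
    adjoint A (A x) = x := by
  have hre : RCLike.re ⟪adjoint A (A x), x⟫_𝕜 = ‖x‖ ^ 2 := by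
    rw [adjoint_inner_left, inner_self_eq_norm_sq, hx]
  have hle : ‖adjoint A (A x)‖ ≤ ‖x‖ :=
    calc ‖adjoint A (A x)‖ ≤ ‖adjoint A‖ * ‖A x‖ := le_opNorm _ _
      _ ≤ 1 * ‖x‖ := by rw [LinearIsometryEquiv.norm_map, hx]; gcongr
      _ = ‖x‖ := one_mul _
  have hsq : ‖adjoint A (A x) - x‖ ^ 2 ≤ 0 := by
    rw [@norm_sub_sq 𝕜, hre]
    nlinarith [norm_nonneg (adjoint A (A x))]
  exact sub_eq_zero.mp (norm_eq_zero.mp (pow_eq_zero_iff two_ne_zero |>.mp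
    (le_antisymm hsq (sq_nonneg _))))

noncomputable def columnOp (T : ι → E →L[𝕜] F) : E →L[𝕜] PiLp 2 fun _ : ι => F :=
  (PiLp.continuousLinearEquiv 2 𝕜 fun _ : ι => F).symm.toContinuousLinearMap ∘L
    ContinuousLinearMap.pi T

@[simp]
theorem columnOp_apply (T : ι → E →L[𝕜] F) (x : E) (k : ι) : columnOp T x k = T k x := rfl

variable [Fintype ι]

theorem norm_columnOp_apply_sq (T : ι → E →L[𝕜] F) (x : E) :
    ‖columnOp T x‖ ^ 2 = ∑ k, ‖T k x‖ ^ 2 := by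
  simp [PiLp.norm_sq_eq_of_L2]

theorem sum_norm_sq_apply_le_of_norm_columnOp_le_one {T : ι → E →L[𝕜] F}
    (hT : ‖columnOp T‖ ≤ 1) (x : E) : ∑ k, ‖T k x‖ ^ 2 ≤ ‖x‖ ^ 2 := by
  rw [← norm_columnOp_apply_sq]
  gcongr
  simpa using (columnOp T).le_of_opNorm_le hT x

variable [CompleteSpace E] [CompleteSpace F]

theorem adjoint_columnOp_apply (T : ι → E →L[𝕜] F) (w : PiLp 2 fun _ : ι => F) :
    adjoint (columnOp T) w = ∑ k, adjoint (T k) (w k) := by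
  refine ext_inner_right 𝕜 fun y => ?_
  simp [adjoint_inner_left, sum_inner, PiLp.inner_apply]

theorem sum_adjoint_apply_apply_eq_self {T : ι → E →L[𝕜] F} (hT : ‖columnOp T‖ ≤ 1) {x : E}
    (hx : ∑ k, ‖T k x‖ ^ 2 = ‖x‖ ^ 2) : ∑ k, adjoint (T k) (T k x) = x := by
  have hnorm : ‖columnOp T x‖ = ‖x‖ := by
    rw [← sq_eq_sq₀ (norm_nonneg _) (norm_nonneg _), norm_columnOp_apply_sq, hx]
  simpa [adjoint_columnOp_apply] using adjoint_apply_apply_eq_self_of_norm_apply_eq hT hnorm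

end ColumnOperator

theorem norm_columnOp_le_norm_blockOp {E : Type*} [NormedAddCommGroup E]
    [InnerProductSpace ℂ E] {d : ℕ} (R : Fin d → Fin d → E →L[ℂ] E) (j : Fin d) :
    ‖columnOp fun i => R i j‖ ≤ ‖blockOp R‖ := by
  classical
  refine opNorm_le_bound _ (norm_nonneg (blockOp R)) fun x => ?_
  have hcol : columnOp (fun i => R i j) x = blockOp R (PiLp.single 2 j x) := by
    ext i
    simp [blockOp, sum_apply, apply_ite]
  simpa [hcol] using (blockOp R).le_opNorm (PiLp.single 2 j x)

theorem VonNeumannAlgebra.apply_apply_comm {M : VonNeumannAlgebra H} {X Y : H →L[ℂ] H}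
    (hX : X ∈ M) (hY : Y ∈ M.commutant) (x : H) : X (Y x) = Y (X x) :=
  congr($(M.mem_commutant_iff.mp hY X hX) x)

theorem VonNeumannAlgebra.adjoint_mem {M : VonNeumannAlgebra H} {A : H →L[ℂ] H} (hA : A ∈ M) :
    adjoint A ∈ M :=
  star_eq_adjoint A ▸ star_mem hA

namespace BipartiteProtocol

variable {M : VonNeumannAlgebra H} {d : ℕ} [NeZero d] {α : Fin d → ℝ}
  {R T : Fin d → Fin d → H →L[ℂ] H} {ψ : H}

-- In the names below, `left` refers to `R` (in `M`) and `right` to `T` (in `M'`).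

theorem swap (h : BipartiteProtocol M α R T ψ) : BipartiteProtocol M.commutant α T R ψ := by
  obtain ⟨hR, hT, hψ, hRT⟩ := h
  refine ⟨hT, by rwa [VonNeumannAlgebra.commutant_commutant], hψ, fun i j => ?_⟩
  rw [← VonNeumannAlgebra.apply_apply_comm (hR.1 j 0) (hT.1 i 0), hRT]
  rcases eq_or_ne i j with rfl | hij
  · rfl
  · rw [if_neg hij.symm, if_neg hij]

theorem norm_sq_right_apply (h : BipartiteProtocol M α R T ψ) (hsum : ∑ i, α i ^ 2 = 1)
    (l : Fin d) : ‖T l 0 ψ‖ ^ 2 = α l ^ 2 := by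
  obtain ⟨hR, hT, hψ, hRT⟩ := h
  have hRcol : ∀ l, ∑ k, ‖R k 0 (T l 0 ψ)‖ ^ 2 = α l ^ 2 := fun l => by
    simp [hRT, apply_ite, norm_smul, hψ]
  have hle : ∀ l ∈ Finset.univ, α l ^ 2 ≤ ‖T l 0 ψ‖ ^ 2 := fun l _ =>
    hRcol l ▸ sum_norm_sq_apply_le_of_norm_columnOp_le_one
      ((norm_columnOp_le_norm_blockOp R 0).trans hR.2) _
  have hTcol : ∑ l, ‖T l 0 ψ‖ ^ 2 ≤ 1 := by
    simpa [hψ] using sum_norm_sq_apply_le_of_norm_columnOp_le_one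
      ((norm_columnOp_le_norm_blockOp T 0).trans hT.2) ψ
  exact ((Finset.sum_eq_sum_iff_of_le hle).mp
    (le_antisymm (Finset.sum_le_sum hle) (hsum ▸ hTcol)) l (Finset.mem_univ l)).symm

theorem sum_adjoint_right_apply (h : BipartiteProtocol M α R T ψ) (hsum : ∑ i, α i ^ 2 = 1) :
    ∑ k, adjoint (T k 0) (T k 0 ψ) = ψ := by
  have hTψ := h.norm_sq_right_apply hsum
  obtain ⟨-, ⟨-, hT⟩, hψ, -⟩ := h
  exact sum_adjoint_apply_apply_eq_self ((norm_columnOp_le_norm_blockOp T 0).trans hT)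
    (by simp [hTψ, hsum, hψ])

theorem left_apply_eq_smul_adjoint_right_apply (h : BipartiteProtocol M α R T ψ)
    (hsum : ∑ i, α i ^ 2 = 1) (l : Fin d) : R l 0 ψ = (α l : ℂ) • adjoint (T l 0) ψ := by
  have hTT := h.sum_adjoint_right_apply hsum
  obtain ⟨⟨hRM, -⟩, ⟨hTM, -⟩, -, hRT⟩ := h
  have hcomm : ∀ k x, R l 0 (adjoint (T k 0) x) = adjoint (T k 0) (R l 0 x) := fun k =>
    VonNeumannAlgebra.apply_apply_comm (hRM l 0) (VonNeumannAlgebra.adjoint_mem (hTM k 0))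
  calc R l 0 ψ = R l 0 (∑ k, adjoint (T k 0) (T k 0 ψ)) := by
        rw [hTT]
    _ = ∑ k, adjoint (T k 0) (R l 0 (T k 0 ψ)) := by simp only [map_sum, hcomm]
    _ = (α l : ℂ) • adjoint (T l 0) ψ := by simp [hRT, apply_ite]

theorem inner_adjoint_left_apply (h : BipartiteProtocol M α R T ψ) (hsum : ∑ i, α i ^ 2 = 1)
    (i j : Fin d) {X : H →L[ℂ] H} (hX : X ∈ M) :
    ⟪adjoint (R i 0) (X (R j 0 ψ)), ψ⟫_ℂ
      = (if i = j then (α i : ℂ) ^ 2 else 0) * ⟪X ψ, ψ⟫_ℂ := by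
  have hRψ := h.left_apply_eq_smul_adjoint_right_apply hsum j
  obtain ⟨⟨hRM, -⟩, ⟨hTM, -⟩, -, hRT⟩ := h
  have hXT : X (adjoint (T j 0) ψ) = adjoint (T j 0) (X ψ) :=
    VonNeumannAlgebra.apply_apply_comm hX (VonNeumannAlgebra.adjoint_mem (hTM j 0)) ψ
  calc ⟪adjoint (R i 0) (X (R j 0 ψ)), ψ⟫_ℂ = α j * ⟪X ψ, T j 0 (R i 0 ψ)⟫_ℂ := by
        rw [adjoint_inner_left, hRψ, map_smul, hXT,
          inner_smul_left, adjoint_inner_left, Complex.conj_ofReal]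
    _ = α j * ⟪X ψ, R i 0 (T j 0 ψ)⟫_ℂ := by
        rw [VonNeumannAlgebra.apply_apply_comm (hRM i 0) (hTM j 0)]
    _ = (if i = j then (α i : ℂ) ^ 2 else 0) * ⟪X ψ, ψ⟫_ℂ := by
        rw [hRT]
        split_ifs with hij
        · subst hij; rw [inner_smul_right]; ring
        · simp

end BipartiteProtocol

theorem bipartite_quasifree_general
    {H : Type*} [NormedAddCommGroup H] [InnerProductSpace ℂ H] [CompleteSpace H]
    (M : VonNeumannAlgebra H) {d : ℕ} [NeZero d]
    (α : Fin d → ℝ) (hsum : ∑ i, (α i) ^ 2 = 1)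
    (R T : Fin d → Fin d → H →L[ℂ] H) (ψ : H)
    (hproto : BipartiteProtocol M α R T ψ) :
    ∀ i j : Fin d,
      (∀ X ∈ M,
        ⟪(adjoint (R i 0)) (X ((R j 0) ψ)), ψ⟫_ℂ
          = (if i = j then ((α i : ℂ)) ^ 2 else 0) * ⟪X ψ, ψ⟫_ℂ) ∧
      (∀ Y ∈ M.commutant,
        ⟪(adjoint (T i 0)) (Y ((T j 0) ψ)), ψ⟫_ℂ
          = (if i = j then ((α i : ℂ)) ^ 2 else 0) * ⟪Y ψ, ψ⟫_ℂ) := fun i j =>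
  ⟨fun _ hX => hproto.inner_adjoint_left_apply hsum i j hX,
    fun _ hY => hproto.swap.inner_adjoint_left_apply hsum i j hY⟩

/-- If `(R, T, ψ)` is a bipartite exact embezzlement protocol for `α`, then the marginal
states are quasi-free: `⟨(R i 0)* X (R j 0) ψ, ψ⟩ = δ_{ij} (α i)² ⟨X ψ, ψ⟩` for `X ∈ M` and
`⟨(T i 0)* Y (T j 0) ψ, ψ⟩ = δ_{ij} (α i)² ⟨Y ψ, ψ⟩` for `Y ∈ M'`. -/
theorem bipartite_quasifree
    {H : Type*} [NormedAddCommGroup H] [InnerProductSpace ℂ H] [CompleteSpace H]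
    (M : VonNeumannAlgebra H) {d : ℕ} [NeZero d] (hd : 2 ≤ d)
    (α : Fin d → ℝ) (hα : ∀ i, 0 < α i) (hsum : ∑ i, (α i) ^ 2 = 1)
    (R T : Fin d → Fin d → H →L[ℂ] H) (ψ : H)
    (hproto : BipartiteProtocol M α R T ψ) :
    ∀ i j : Fin d,
      (∀ X ∈ M,
        ⟪(adjoint (R i 0)) (X ((R j 0) ψ)), ψ⟫_ℂ
          = (if i = j then ((α i : ℂ)) ^ 2 else 0) * ⟪X ψ, ψ⟫_ℂ) ∧
      (∀ Y ∈ M.commutant,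
        ⟪(adjoint (T i 0)) (Y ((T j 0) ψ)), ψ⟫_ℂ
          = (if i = j then ((α i : ℂ)) ^ 2 else 0) * ⟪Y ψ, ψ⟫_ℂ) :=
  bipartite_quasifree_general M α hsum R T ψ hproto
end

section
/- Let M ⊆ B(H) be a von Neumann algebra and let (R, ψ) be a monopartite exact embezzlement protocol for α in (M, H). Then for every nonempty list μ = [μ₁, …, μ_m] over Fin d, ⟨(R μ₁ 0)(R μ₂ 0) ⋯ (R μ_m 0) ψ, ψ⟩ = 0. -/
open scoped InnerProductSpace
open ContinuousLinearMap

variable {H : Type*} [NormedAddCommGroup H] [InnerProductSpace ℂ H] [CompleteSpace H]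

/-!
The column `C = (R i 0)ᵢ : H → ℓ²(Fin d; H)` of the contraction `R` is itself a contraction, and
`‖C ψ‖² = ∑ i, α i ^ 2 = ‖ψ‖²`; a contraction attaining its norm at `ψ` satisfies `C† C ψ = ψ`,
so `⟪w, ψ⟫ = ∑ i, ⟪R i 0 w, R i 0 ψ⟫` for every `w`. Applying the protocol identity to
`X = R i 0 * B` then turns the state `φ B = ⟪B ψ, ψ⟫` into a twisted trace on `M`:
`φ (B * R l 0) = α l ^ 2 * φ (R l 0 * B)`. Moving the letters of a word `μ` one by one from its
right end to its left end gives back the same word, whence `φ R_μ = (∏ₖ α μₖ ^ 2) * φ R_μ`.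
Since `d ≥ 2` and all `α i > 0`, every `α i ^ 2 < 1`, so the product is `< 1` and `φ R_μ = 0`.
-/

section Contraction

variable {𝕜 E F : Type*} [RCLike 𝕜] [NormedAddCommGroup E] [InnerProductSpace 𝕜 E]
  [CompleteSpace E] [NormedAddCommGroup F] [InnerProductSpace 𝕜 F] [CompleteSpace F]
  {T : E →L[𝕜] F} {x : E}

theorem ContinuousLinearMap.adjoint_apply_apply_eq_self_of_norm_apply_eq_s12 (hT : ‖T‖ ≤ 1)
    (hx : ‖T x‖ = ‖x‖) : adjoint T (T x) = x := by
  set u := adjoint T (T x)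
  have hux : RCLike.re ⟪u, x⟫_𝕜 = ‖x‖ ^ 2 := by
    rw [adjoint_inner_left, inner_self_eq_norm_sq, hx]
  have hu : ‖u‖ ≤ ‖x‖ :=
    calc ‖u‖ ≤ ‖adjoint T‖ * ‖T x‖ := le_opNorm _ _
      _ ≤ 1 * ‖x‖ := by rw [LinearIsometryEquiv.norm_map, hx]; gcongr
      _ = ‖x‖ := one_mul _
  have : ‖u - x‖ ^ 2 ≤ 0 := by
    rw [norm_sub_sq (𝕜 := 𝕜), hux]
    nlinarith [norm_nonneg u]
  exact sub_eq_zero.mp (norm_eq_zero.mp (by nlinarith [norm_nonneg (u - x)]))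

theorem ContinuousLinearMap.inner_apply_apply_eq_of_norm_apply_eq (hT : ‖T‖ ≤ 1)
    (hx : ‖T x‖ = ‖x‖) (w : E) : ⟪T w, T x⟫_𝕜 = ⟪w, x⟫_𝕜 := by
  rw [← adjoint_inner_right, adjoint_apply_apply_eq_self_of_norm_apply_eq_s12 hT hx]

end Contraction

section Column

variable {d : ℕ}

noncomputable def blockColumn (R : Fin d → Fin d → H →L[ℂ] H) (j : Fin d) :
    H →L[ℂ] PiLp 2 (fun _ : Fin d => H) :=
  ((PiLp.continuousLinearEquiv 2 ℂ (fun _ : Fin d => H)).symm :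
      (∀ _ : Fin d, H) →L[ℂ] PiLp 2 (fun _ : Fin d => H)) ∘L
    ContinuousLinearMap.pi fun i => R i j

omit [CompleteSpace H] in
@[simp]
theorem blockColumn_apply (R : Fin d → Fin d → H →L[ℂ] H) (j : Fin d) (x : H) (i : Fin d) :
    blockColumn R j x i = R i j x :=
  rfl

omit [CompleteSpace H] in
theorem blockColumn_apply_eq_blockOp_single (R : Fin d → Fin d → H →L[ℂ] H) (j : Fin d) (x : H) :
    blockColumn R j x = blockOp R (PiLp.single 2 j x) := by
  ext i
  simp [blockOp, apply_ite]

omit [CompleteSpace H] in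
theorem norm_blockColumn_le (R : Fin d → Fin d → H →L[ℂ] H) (j : Fin d) :
    ‖blockColumn R j‖ ≤ ‖blockOp R‖ :=
  opNorm_le_bound _ (norm_nonneg (blockOp R)) fun x => by
    simpa [blockColumn_apply_eq_blockOp_single, PiLp.norm_single] using
      (blockOp R).le_opNorm (PiLp.single 2 j x)

theorem inner_eq_sum_inner_of_norm_blockOp_le_one {R : Fin d → Fin d → H →L[ℂ] H}
    (hR : ‖blockOp R‖ ≤ 1) (j : Fin d) {ψ : H} (hψ : ∑ i, ‖R i j ψ‖ ^ 2 = ‖ψ‖ ^ 2) (w : H) :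
    ⟪w, ψ⟫_ℂ = ∑ i, ⟪R i j w, R i j ψ⟫_ℂ := by
  have hcol : ‖blockColumn R j ψ‖ = ‖ψ‖ := by
    rw [← sq_eq_sq₀ (norm_nonneg _) (norm_nonneg _), PiLp.norm_sq_eq_of_L2]
    simpa using hψ
  rw [← inner_apply_apply_eq_of_norm_apply_eq ((norm_blockColumn_le R j).trans hR) hcol w,
    PiLp.inner_apply]
  simp only [blockColumn_apply]

end Column

section Twisted

variable {A K ι S : Type*} [Monoid A] [CommMonoid K] [SetLike S A] [SubmonoidClass S A]

theorem apply_prod_map_append_swap {s : S} (φ : A → K) {r : ι → A} (c : ι → K)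
    (hr : ∀ i, r i ∈ s) (hφ : ∀ b ∈ s, ∀ i, φ (b * r i) = c i * φ (r i * b)) (μ ν : List ι) :
    φ ((μ ++ ν).map r).prod = (ν.map c).prod * φ ((ν ++ μ).map r).prod := by
  induction ν generalizing μ with
  | nil => simp
  | cons a ν ih =>
    have hmem : ((ν ++ μ).map r).prod ∈ s :=
      list_prod_mem fun b hb => by obtain ⟨i, -, rfl⟩ := List.mem_map.1 hb; exact hr i
    calc φ ((μ ++ a :: ν).map r).prod = φ ((μ ++ [a] ++ ν).map r).prod := by simp
      _ = (ν.map c).prod * φ (((ν ++ μ).map r).prod * r a) := by rw [ih]; simp [mul_assoc]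
      _ = ((a :: ν).map c).prod * φ ((a :: ν ++ μ).map r).prod := by
        rw [hφ _ hmem]; simp [mul_assoc, mul_left_comm]

end Twisted

namespace MonopartiteProtocol

variable {M : VonNeumannAlgebra H} {d : ℕ} [NeZero d] {α : Fin d → ℝ}
  {R : Fin d → Fin d → H →L[ℂ] H} {ψ : H}

theorem norm_apply_sq (h : MonopartiteProtocol M α R ψ) (i : Fin d) :
    ‖R i 0 ψ‖ ^ 2 = α i ^ 2 := by
  have := h.2.2 1 M.one_mem i i
  rw [one_apply_eq_self, one_apply_eq_self, if_pos rfl, adjoint_inner_left,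
    inner_self_eq_norm_sq_to_K, inner_self_eq_norm_sq_to_K, h.2.1] at this
  have hsq : (‖R i 0 ψ‖ : ℂ) ^ 2 = (α i : ℂ) ^ 2 := by simpa using this
  exact_mod_cast hsq

theorem inner_eq_sum_inner (h : MonopartiteProtocol M α R ψ) (hsum : ∑ i, α i ^ 2 = 1) (w : H) :
    ⟪w, ψ⟫_ℂ = ∑ i, ⟪R i 0 w, R i 0 ψ⟫_ℂ :=
  inner_eq_sum_inner_of_norm_blockOp_le_one h.1.2 0 (by simp [h.norm_apply_sq, hsum, h.2.1]) w

theorem inner_mul_apply_rotate (h : MonopartiteProtocol M α R ψ) (hsum : ∑ i, α i ^ 2 = 1)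
    {B : H →L[ℂ] H} (hB : B ∈ M) (l : Fin d) :
    ⟪(B * R l 0) ψ, ψ⟫_ℂ = (α l : ℂ) ^ 2 * ⟪(R l 0 * B) ψ, ψ⟫_ℂ := by
  have hterm : ∀ i, ⟪R i 0 ((B * R l 0) ψ), R i 0 ψ⟫_ℂ
      = (if i = l then (α i : ℂ) ^ 2 else 0) * ⟪(R i 0 * B) ψ, ψ⟫_ℂ := fun i => by
    rw [← adjoint_inner_left]
    exact h.2.2 _ (mul_mem (h.1.1 i 0) hB) i l
  rw [h.inner_eq_sum_inner hsum, Finset.sum_congr rfl fun i _ => hterm i]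
  simp

end MonopartiteProtocol

theorem sq_lt_one_of_sum_sq_eq_one {ι : Type*} [Fintype ι] [Nontrivial ι] {α : ι → ℝ}
    (hα : ∀ i, 0 < α i) (hsum : ∑ i, α i ^ 2 = 1) (i : ι) : α i ^ 2 < 1 := by
  obtain ⟨j, hji⟩ := exists_ne i
  exact hsum ▸ Finset.single_lt_sum hji (Finset.mem_univ i) (Finset.mem_univ j)
    (pow_pos (hα j) 2) fun k _ _ => sq_nonneg (α k)

/-- If `(R, ψ)` is a monopartite exact embezzlement protocol for `α`, then for every nonempty
word `μ = [μ₁, …, μ_m]` over `Fin d`, `⟨(R μ₁ 0) ⋯ (R μ_m 0) ψ, ψ⟩ = 0`. -/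
theorem state_vanishes_on_words
    {H : Type*} [NormedAddCommGroup H] [InnerProductSpace ℂ H] [CompleteSpace H]
    (M : VonNeumannAlgebra H) {d : ℕ} [NeZero d] (hd : 2 ≤ d)
    (α : Fin d → ℝ) (hα : ∀ i, 0 < α i) (hsum : ∑ i, (α i) ^ 2 = 1)
    (R : Fin d → Fin d → H →L[ℂ] H) (ψ : H)
    (hproto : MonopartiteProtocol M α R ψ) :
    ∀ μ : List (Fin d), μ ≠ [] →
      ⟪((μ.map (fun i => R i 0)).prod) ψ, ψ⟫_ℂ = 0 := by
  intro μ hμ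
  have hrotate := apply_prod_map_append_swap (s := M) (fun B => ⟪B ψ, ψ⟫_ℂ)
    (fun i => (α i : ℂ) ^ 2) (fun i => hproto.1.1 i 0)
    (fun _ hB l => hproto.inner_mul_apply_rotate hsum hB l) [] μ
  rw [List.nil_append, List.append_nil] at hrotate
  have : Nontrivial (Fin d) := Fin.nontrivial_iff_two_le.mpr hd
  have hlt : (μ.map fun i => α i ^ 2).prod < 1 := by
    simpa using List.prod_map_lt_prod_map hμ _ (fun _ => 1) (fun i _ => pow_pos (hα i) 2)
      fun i _ => sq_lt_one_of_sum_sq_eq_one hα hsum i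
  have hne : (μ.map fun i => (α i : ℂ) ^ 2).prod ≠ 1 := by
    have hcast : (μ.map fun i => (α i : ℂ) ^ 2).prod = ((μ.map fun i => α i ^ 2).prod : ℝ) := by
      rw [← Complex.ofRealHom_eq_coe, map_list_prod, List.map_map]
      simp [Function.comp_def]
    rw [hcast]
    exact_mod_cast hlt.ne
  exact (mul_left_eq_self₀.mp hrotate.symm).resolve_left hne
end
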